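/- arXiv:2205.09205 — 6 statements merged into one kernel-verified Lean document; each statement's English description precedes it below -/
import Mathlib

section
/- Let a group Γ act on a set X, let g ∈ Γ, and suppose A ⊆ X is non-recurrent with respect to g, meaning for every x ∈ X the set {n ≥ 1 : gⁿx ∈ A} is finite. Then A is a countable union of wandering sets. -/
open Pointwise

variable {Γ X : Type*} [Group Γ] [MulAction Γ X]

/-- `A` is wandering with respect to `g`. -/
def Wandering (g : Γ) (A : Set X) : Prop :=
  ∀ n m : ℤ, n ≠ m → Disjoint (g ^ n • A) (g ^ m • A)

/-- A set which is non-recurrent with respect to some `g ∈ Γ` is a countable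
union of wandering sets. -/
theorem nonrecurrent_union_wandering (Γ X : Type*) [Group Γ] [MulAction Γ X]
    (g : Γ) (A : Set X)
    (hnr : ∀ x : X, {n : ℕ | 1 ≤ n ∧ g ^ n • x ∈ A}.Finite) :
    ∃ f : ℕ → Set X, (∀ n, ∃ h : Γ, Wandering h (f n)) ∧ A = ⋃ n, f n := by
  set f : ℕ → Set X := fun k =>
    {x | x ∈ A ∧ g ^ k • x ∈ A ∧ ∀ l : ℕ, k < l → g ^ l • x ∉ A} with hf
  have key : ∀ (k : ℕ) (x y : X), x ∈ f k → y ∈ f k →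
      ∀ d : ℕ, 0 < d → g ^ d • x ≠ y := by
    intro k x y hx hy d hd heq
    rcases le_or_gt d k with h | h
    · have : g ^ (k + d) • x ∈ A := by
        rw [pow_add, mul_smul, heq]
        exact hy.2.1
      exact hx.2.2 (k + d) (by omega) this
    · exact hx.2.2 d h (heq ▸ hy.1)
  have cancel : ∀ (a b : ℤ) (u v : X), g ^ a • u = g ^ b • v → g ^ (a - b) • u = v := by
    intro a b u v h
    have hab : a - b = -b + a := by ring
    rw [hab, zpow_add, mul_smul, h, ← mul_smul, ← zpow_add, neg_add_cancel, zpow_zero,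
      one_smul]
  refine ⟨f, fun k => ⟨g, ?_⟩, ?_⟩
  · intro n m hnm
    rw [Set.disjoint_left]
    rintro z ⟨x, hx, rfl⟩ ⟨y, hy, heq⟩
    rcases lt_trichotomy n m with h | h | h
    · have hd : g ^ (m - n) • y = x := cancel m n y x heq
      rw [show (m - n) = ((m - n).toNat : ℤ) from (Int.toNat_of_nonneg (by omega)).symm,
        zpow_natCast] at hd
      exact key _ _ _ hy hx _ (by omega) hd
    · exact hnm h
    · have hd : g ^ (n - m) • x = y := cancel n m x y heq.symm
      rw [show (n - m) = ((n - m).toNat : ℤ) from (Int.toNat_of_nonneg (by omega)).symm,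
        zpow_natCast] at hd
      exact key _ _ _ hx hy _ (by omega) hd
  · apply Set.Subset.antisymm
    · intro x hx
      by_cases hne : ∃ n : ℕ, 1 ≤ n ∧ g ^ n • x ∈ A
      · have hSne : (hnr x).toFinset.Nonempty := by
          obtain ⟨n, hn⟩ := hne
          exact ⟨n, by simpa using hn⟩
        set k := (hnr x).toFinset.max' hSne with hk
        have hkmem : 1 ≤ k ∧ g ^ k • x ∈ A := by
          have := (hnr x).toFinset.max'_mem hSne
          simpa using this
        refine Set.mem_iUnion.2 ⟨k, hx, hkmem.2, fun l hl hmem => ?_⟩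
        have : l ∈ (hnr x).toFinset := by simp [Set.mem_setOf_eq]; exact ⟨by omega, hmem⟩
        have := (hnr x).toFinset.le_max' l this
        omega
      · refine Set.mem_iUnion.2 ⟨0, hx, by simpa using hx, fun l hl hmem => ?_⟩
        exact hne ⟨l, by omega, hmem⟩
    · intro x hx
      obtain ⟨k, hk⟩ := Set.mem_iUnion.1 hx
      exact hk.1
end

section
/- Let a group Γ act on a set X, let g ∈ Γ and N ∈ ℕ, and suppose A ⊆ X satisfies gⁿA ∩ A = ∅ for all n ≥ N. Then A is a countable union of wandering sets; in particular A is null for every Γ-invariant probability measure (assuming measurability). -/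
open Pointwise

open MeasureTheory

variable {Γ X : Type*} [Group Γ] [MulAction Γ X]

/-- If `gⁿA ∩ A = ∅` for all `n ≥ N`, then `A` is a countable union of
wandering sets; in particular `A` is null for every invariant probability
measure. -/
theorem eventually_disjoint_union_wandering (Γ X : Type*) [Group Γ]
    [MulAction Γ X] (g : Γ) (N : ℕ) (A : Set X)
    (h : ∀ n : ℕ, N ≤ n → g ^ n • A ∩ A = ∅) :
    (∃ f : ℕ → Set X, (∀ n, ∃ h : Γ, Wandering h (f n)) ∧ A = ⋃ n, f n) ∧
    (∀ (m : MeasurableSpace X) (μ : @Measure X m),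
      @IsProbabilityMeasure X m μ →
      (∀ (γ : Γ) (B : Set X), MeasurableSet[m] B →
        μ ((fun x : X => γ • x) ⁻¹' B) = μ B) →
      MeasurableSet[m] A → μ A = 0) := by
  classical
  set M : ℕ := max N 1 with hMdef
  have hM1 : 1 ≤ M := le_max_right _ _
  have h' : ∀ n : ℕ, M ≤ n → ∀ x ∈ A, g ^ n • x ∉ A := by
    intro n hn x hx hgx
    have hmem : g ^ n • x ∈ g ^ n • A ∩ A :=
      ⟨Set.smul_mem_smul_set hx, hgx⟩
    rw [h n (le_trans (le_max_left _ _) hn)] at hmem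
    exact hmem
  -- the counting function
  set S : X → Finset ℕ := fun x => (Finset.Ico 1 M).filter (fun n => g ^ n • x ∈ A)
    with hSdef
  set f : ℕ → Set X := fun k => {x ∈ A | (S x).card = k} with hfdef
  -- key: no point of `f k` returns to `f k` under a positive power of `g`
  have key : ∀ (k d : ℕ), 1 ≤ d → ∀ x, x ∈ f k → g ^ d • x ∈ f k → False := by
    intro k d hd x hx hy
    obtain ⟨hxA, hxk⟩ := hx
    obtain ⟨hyA, hyk⟩ := hy
    have hdM : d < M := by
      by_contra hc
      push_neg at hc
      exact h' d hc x hxA hyA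
    have hsub : insert d ((S (g ^ d • x)).image (· + d)) ⊆ S x := by
      intro p hp
      rcases Finset.mem_insert.1 hp with rfl | hp
      · simp only [hSdef, Finset.mem_filter, Finset.mem_Ico]
        exact ⟨⟨hd, hdM⟩, hyA⟩
      · obtain ⟨a, ha, rfl⟩ := Finset.mem_image.1 hp
        simp only [hSdef, Finset.mem_filter, Finset.mem_Ico] at ha ⊢
        obtain ⟨⟨ha1, haM⟩, hga⟩ := ha
        have hgad : g ^ (a + d) • x ∈ A := by
          rw [pow_add, mul_smul]; exact hga
        have hlt : a + d < M := by
          by_contra hc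
          push_neg at hc
          exact h' _ hc x hxA hgad
        exact ⟨⟨by omega, hlt⟩, hgad⟩
    have hnotmem : d ∉ (S (g ^ d • x)).image (· + d) := by
      intro hmem
      obtain ⟨a, ha, hEq⟩ := Finset.mem_image.1 hmem
      have : 1 ≤ a := (Finset.mem_Ico.1 (Finset.mem_filter.1 ha).1).1
      omega
    have hcard : (S (g ^ d • x)).card + 1 ≤ (S x).card := by
      have := Finset.card_le_card hsub
      rwa [Finset.card_insert_of_notMem hnotmem,
        Finset.card_image_of_injective _ (add_left_injective d)] at this
    omega
  -- each `f k` is wandering with respect to `g`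
  have noB : ∀ k : ℕ, ∀ x ∈ f k, ∀ y ∈ f k, ∀ dd : ℤ, 0 < dd →
      g ^ dd • x = y → False := by
    intro k x hx y hy dd hdd hEq
    set d : ℕ := dd.toNat with hddef
    have hdd' : dd = (d : ℤ) := (Int.toNat_of_nonneg hdd.le).symm
    have hd1 : 1 ≤ d := by omega
    have : g ^ d • x = y := by rw [← zpow_natCast g d, ← hdd']; exact hEq
    exact key k d hd1 x hx (this ▸ hy)
  have hw : ∀ k : ℕ, Wandering g (f k) := by
    intro k n m hnm
    rw [Set.disjoint_left]
    rintro z hzn hzm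
    obtain ⟨x, hxB, hxz⟩ := hzn
    obtain ⟨y, hyB, hyz⟩ := hzm
    have e : g ^ (n - m) • x = y := by
      have h1 : (g ^ m)⁻¹ • z = y := by rw [← hyz, inv_smul_smul]
      rw [← h1, ← hxz, smul_smul, ← zpow_neg, ← zpow_add, neg_add_eq_sub]
    rcases lt_or_gt_of_ne hnm with hlt | hlt
    · -- n < m : x = g^(m-n) • y
      have e' : g ^ (m - n) • y = x := by
        rw [← e, smul_smul, ← zpow_add]
        simp
      exact noB k y hyB x hxB (m - n) (by omega) e'
    · exact noB k x hxB y hyB (n - m) (by omega) e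
  have hAunion : A = ⋃ n, f n := by
    ext x
    constructor
    · intro hx
      exact Set.mem_iUnion.2 ⟨(S x).card, hx, rfl⟩
    · intro hx
      obtain ⟨k, hk⟩ := Set.mem_iUnion.1 hx
      exact hk.1
  refine ⟨⟨f, fun n => ⟨g, hw n⟩, hAunion⟩, ?_⟩
  -- measure part
  intro m μ hprob hinv hA
  have inv_le : ∀ (γ : Γ) (T : Set X), μ ((fun x : X => γ • x) ⁻¹' T) ≤ μ T := by
    intro γ T
    calc μ ((fun x : X => γ • x) ⁻¹' T)
        ≤ μ ((fun x : X => γ • x) ⁻¹' toMeasurable μ T) :=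
          measure_mono (Set.preimage_mono (subset_toMeasurable _ _))
      _ = μ (toMeasurable μ T) := hinv γ _ (measurableSet_toMeasurable _ _)
      _ = μ T := measure_toMeasurable _
  have inv_eq : ∀ (γ : Γ) (T : Set X), μ ((fun x : X => γ • x) ⁻¹' T) = μ T := by
    intro γ T
    refine le_antisymm (inv_le γ T) ?_
    have hT : T = (fun x : X => γ⁻¹ • x) ⁻¹' ((fun x : X => γ • x) ⁻¹' T) := by
      ext x; simp
    calc μ T = μ ((fun x : X => γ⁻¹ • x) ⁻¹' ((fun x : X => γ • x) ⁻¹' T)) := by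
          rw [← hT]
      _ ≤ μ ((fun x : X => γ • x) ⁻¹' T) := inv_le γ⁻¹ _
  set C : ℕ → Set X := fun k => (fun x : X => g ^ (k * M) • x) ⁻¹' A with hCdef
  set U : ℕ → Set X := fun n => ⋃ k ∈ Finset.range n, C k with hUdef
  have hAC : A ⊆ U 1 := by
    intro x hx
    refine Set.mem_biUnion (x := 0) (Finset.mem_range.2 (by omega)) ?_
    simp [hCdef, hx]
  have step : ∀ n : ℕ, μ (U (n + 1)) = μ A + μ (U n) := by
    intro n
    have hsplit : μ (U (n + 1) ∩ A) + μ (U (n + 1) \ A) = μ (U (n + 1)) :=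
      measure_inter_add_diff _ hA
    have h1 : U (n + 1) ∩ A = A := by
      apply Set.inter_eq_self_of_subset_right
      intro x hx
      exact Set.mem_biUnion (x := 0) (Finset.mem_range.2 (by omega : 0 < n + 1))
        (by simp [hCdef, hx])
    have h2 : U (n + 1) \ A = (fun x : X => g ^ M • x) ⁻¹' U n := by
      ext x
      constructor
      · rintro ⟨hxU, hxA⟩
        obtain ⟨k, hk, hxk⟩ : ∃ k, k ∈ Finset.range (n + 1) ∧ x ∈ C k := by
          simpa [hUdef] using hxU
        have hk' : k < n + 1 := Finset.mem_range.1 hk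
        have hk0 : k ≠ 0 := by
          rintro rfl
          simp only [hCdef, Set.mem_preimage, Nat.zero_mul, pow_zero, one_smul] at hxk
          exact hxA hxk
        obtain ⟨j, rfl⟩ : ∃ j, k = j + 1 := ⟨k - 1, by omega⟩
        refine Set.mem_biUnion (x := j) (Finset.mem_range.2 (by omega)) ?_
        simp only [hCdef, Set.mem_preimage] at hxk ⊢
        rw [← mul_smul, ← pow_add]
        have : j * M + M = (j + 1) * M := by ring
        rw [this]
        exact hxk
      · intro hx
        obtain ⟨k, hk, hxk⟩ : ∃ k, k ∈ Finset.range n ∧ g ^ M • x ∈ C k := by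
          simpa [hUdef] using hx
        simp only [hCdef, Set.mem_preimage] at hxk
        rw [← mul_smul, ← pow_add] at hxk
        have hx' : g ^ ((k + 1) * M) • x ∈ A := by
          have : (k + 1) * M = k * M + M := by ring
          rw [this]; exact hxk
        have hkn : k < n := Finset.mem_range.1 hk
        constructor
        · refine Set.mem_biUnion (x := k + 1) (Finset.mem_range.2 (by omega)) ?_
          simpa [hCdef] using hx'
        · intro hxA
          exact h' ((k + 1) * M) (by nlinarith) x hxA hx'
    rw [← hsplit, h1, h2, inv_eq]
  have base : μ (U 0) = 0 := by simp [hUdef]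
  have total : ∀ n : ℕ, μ (U n) = (n : ENNReal) * μ A := by
    intro n
    induction n with
    | zero => simpa using base
    | succ n ih =>
        rw [step n, ih]
        push_cast
        ring
  by_contra hne
  have h1top : 1 / μ A ≠ ⊤ :=
    (ENNReal.div_lt_top ENNReal.one_ne_top hne).ne
  obtain ⟨n, hn⟩ := ENNReal.exists_nat_gt h1top
  have hle : (n : ENNReal) * μ A ≤ 1 := by
    rw [← total n]
    exact prob_le_one
  have : (n : ENNReal) ≤ 1 / μ A :=
    ENNReal.le_div_iff_mul_le (Or.inl hne) (Or.inr ENNReal.one_ne_top) |>.2 hle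
  exact absurd this (not_le.2 hn)
end

section
/- Let a group Γ act on a set X and let W denote the σ-ideal generated by wandering sets. Suppose A ⊆ X, g ∈ Γ, and N ∈ ℕ satisfy gⁿA ∩ A ∈ W for all n ≥ N. Then A ∈ W. -/
open Pointwise

variable {Γ X : Type*} [Group Γ] [MulAction Γ X]

/-- `A` is a countable union of wandering sets. -/
def InW (A : Set X) : Prop :=
  ∃ f : ℕ → Set X, (∀ n, ∃ g : Γ, Wandering g (f n)) ∧ A = ⋃ n, f n

lemma wandering_mono {g : Γ} {A B : Set X} (hBA : B ⊆ A) (h : Wandering g A) :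
    Wandering g B := fun n m hnm =>
  (h n m hnm).mono (Set.smul_set_mono hBA) (Set.smul_set_mono hBA)

lemma inW_mono {A B : Set X} (h : InW (Γ := Γ) A) (hBA : B ⊆ A) : InW (Γ := Γ) B := by
  obtain ⟨f, hf, rfl⟩ := h
  refine ⟨fun n => f n ∩ B, fun n => ?_, ?_⟩
  · obtain ⟨g, hg⟩ := hf n
    exact ⟨g, wandering_mono Set.inter_subset_left hg⟩
  · ext x
    simp only [Set.mem_iUnion, Set.mem_inter_iff]
    constructor
    · intro hx
      obtain ⟨n, hn⟩ := Set.mem_iUnion.1 (hBA hx)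
      exact ⟨n, hn, hx⟩
    · rintro ⟨n, _, hx⟩; exact hx

lemma inW_iUnion {f : ℕ → Set X} (h : ∀ n, InW (Γ := Γ) (f n)) :
    InW (Γ := Γ) (⋃ n, f n) := by
  choose F hF hFeq using h
  let e : ℕ ≃ ℕ × ℕ := (Denumerable.eqv (ℕ × ℕ)).symm
  refine ⟨fun n => F (e n).1 (e n).2, fun n => hF _ _, ?_⟩
  ext x
  simp only [Set.mem_iUnion]
  constructor
  · rintro ⟨n, hn⟩
    rw [hFeq n] at hn
    obtain ⟨m, hm⟩ := Set.mem_iUnion.1 hn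
    exact ⟨e.symm (n, m), by simpa using hm⟩
  · rintro ⟨n, hn⟩
    refine ⟨(e n).1, ?_⟩
    rw [hFeq]
    exact Set.mem_iUnion.2 ⟨(e n).2, hn⟩

lemma wandering_smul {g : Γ} (s : Γ) {A : Set X} (h : Wandering g A) :
    Wandering (s * g * s⁻¹) (s • A) := by
  intro n m hnm
  have key : ∀ k : ℤ, (s * g * s⁻¹) ^ k • (s • A) = s • (g ^ k • A) := by
    intro k
    have hc : (s * g * s⁻¹) ^ k = s * g ^ k * s⁻¹ := by
      simpa [MulAut.conj_apply] using (map_zpow (MulAut.conj s) g k).symm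
    rw [hc, smul_smul, smul_smul]
    group
  rw [key n, key m]
  exact Set.disjoint_image_of_injective (MulAction.injective s) (h n m hnm)

lemma inW_smul {A : Set X} (s : Γ) (h : InW (Γ := Γ) A) : InW (Γ := Γ) (s • A) := by
  obtain ⟨f, hf, rfl⟩ := h
  refine ⟨fun n => s • f n, fun n => ?_, ?_⟩
  · obtain ⟨g, hg⟩ := hf n
    exact ⟨s * g * s⁻¹, wandering_smul s hg⟩
  · rw [Set.smul_set_iUnion]

lemma inW_union {A B : Set X} (hA : InW (Γ := Γ) A) (hB : InW (Γ := Γ) B) :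
    InW (Γ := Γ) (A ∪ B) := by
  have h1 : InW (Γ := Γ) (⋃ n : ℕ, if n = 0 then A else B) :=
    inW_iUnion (fun n => by by_cases h : n = 0 <;> simp [h, hA, hB])
  have heq : (⋃ n : ℕ, if n = 0 then A else B) = A ∪ B := by
    ext x
    simp only [Set.mem_iUnion, Set.mem_union]
    constructor
    · rintro ⟨n, hn⟩
      by_cases h : n = 0
      · left; simpa [h] using hn
      · right; simpa [h] using hn
    · rintro (h | h)
      exacts [⟨0, by simp [h]⟩, ⟨1, by simp [h]⟩]
  rwa [heq] at h1

/-- If `gⁿA ∩ A` lies in the σ-ideal generated by wandering sets for all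
`n ≥ N`, then so does `A`. -/
theorem inW_of_eventually_inW (Γ X : Type*) [Group Γ] [MulAction Γ X]
    (g : Γ) (N : ℕ) (A : Set X)
    (h : ∀ n : ℕ, N ≤ n → InW (Γ := Γ) (g ^ n • A ∩ A)) :
    InW (Γ := Γ) A := by
  classical
  set B : Set X := {x ∈ A | ∀ n : ℕ, N ≤ n → (g ^ n) • x ∉ A} with hBdef
  -- B is wandering with respect to g ^ N
  have wB : Wandering (g ^ N) B := by
    have key : ∀ n m : ℤ, n < m → Disjoint ((g ^ N) ^ n • B) ((g ^ N) ^ m • B) := by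
      intro n m hnm
      rw [Set.disjoint_left]
      intro x hxn hxm
      rw [Set.mem_smul_set_iff_inv_smul_mem] at hxn hxm
      set y := ((g ^ N) ^ n)⁻¹ • x with hy
      set z := ((g ^ N) ^ m)⁻¹ • x with hz
      set k : ℕ := (m - n).toNat with hk
      have hk1 : 1 ≤ k := by omega
      have hkz : (m - n : ℤ) = (k : ℤ) := by omega
      have hyz : y = (g ^ (N * k)) • z := by
        rw [hy, hz, smul_smul]
        congr 1
        rw [pow_mul, ← zpow_natCast (g ^ N) k, ← hkz]
        group
      have hNk : N ≤ N * k := Nat.le_mul_of_pos_right N hk1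
      exact hxm.2 (N * k) hNk (hyz ▸ hxn.1)
    intro n m hnm
    rcases hnm.lt_or_gt with h' | h'
    · exact key n m h'
    · exact (key m n h').symm
  have hB : InW (Γ := Γ) B :=
    ⟨fun _ => B, fun _ => ⟨g ^ N, wB⟩, (Set.iUnion_const B).symm⟩
  -- the remaining part
  set C : Set X := ⋃ k : ℕ, (g ^ (N + k))⁻¹ • (g ^ (N + k) • A ∩ A) with hCdef
  have hC : InW (Γ := Γ) C :=
    inW_iUnion (fun k => inW_smul _ (h (N + k) (Nat.le_add_right N k)))
  refine inW_mono (inW_union hB hC) ?_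
  intro x hx
  by_cases hcase : ∀ n : ℕ, N ≤ n → (g ^ n) • x ∉ A
  · exact Or.inl ⟨hx, hcase⟩
  · push_neg at hcase
    obtain ⟨n, hNn, hn⟩ := hcase
    refine Or.inr (Set.mem_iUnion.2 ⟨n - N, ?_⟩)
    have hn' : N + (n - N) = n := by omega
    rw [hn', Set.mem_smul_set_iff_inv_smul_mem, inv_inv]
    exact ⟨Set.smul_mem_smul_set hx, hn⟩
end

section
/- Let Γ be a countable group acting on the space Ord(Γ) of total orders on Γ by (γ·≺): x (γ·≺) y iff γ⁻¹x ≺ γ⁻¹y. Then this action has the uniform specification property: for every finite D ⊆ Γ, setting F = DD⁻¹, for all total orders ≺₁, ≺₂ and every K ⊆ Γ there is a total order ≺ such that (g·≺) and (g·≺₁) agree on D×D for all g ∈ K, and (g·≺) and (g·≺₂) agree on D×D for all g ∈ Γ \ (FK). -/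
variable {Γ : Type*} [Group Γ]

/-- `r` is a total order (non-reflexive, transitive, totally antisymmetric). -/
def IsTotalOrderRel (r : Γ → Γ → Prop) : Prop :=
  (∀ x, ¬ r x x) ∧ (∀ x y z, r x y → r y z → r x z) ∧
    (∀ x y, x ≠ y → Xor' (r x y) (r y x))

/-- The uniform specification property of the `Γ`-action on the space of
total orders: with `F = D D⁻¹`, for any orders `≺₁, ≺₂` and any `K ⊆ Γ` there
is an order `≺` such that `g·≺` agrees with `g·≺₁` on `D × D` for `g ∈ K` and
with `g·≺₂` on `D × D` for `g ∉ FK`. -/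
theorem ord_specification (Γ : Type*) [Group Γ] [Countable Γ]
    (D : Finset Γ) (r1 r2 : Γ → Γ → Prop)
    (h1 : IsTotalOrderRel r1) (h2 : IsTotalOrderRel r2) (K : Set Γ) :
    ∃ r : Γ → Γ → Prop, IsTotalOrderRel r ∧
      (∀ g ∈ K, ∀ x ∈ D, ∀ y ∈ D,
        (r (g⁻¹ * x) (g⁻¹ * y) ↔ r1 (g⁻¹ * x) (g⁻¹ * y))) ∧
      (∀ g : Γ, (¬ ∃ d1 ∈ D, ∃ d2 ∈ D, ∃ k ∈ K, g = d1 * d2⁻¹ * k) →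
        ∀ x ∈ D, ∀ y ∈ D,
          (r (g⁻¹ * x) (g⁻¹ * y) ↔ r2 (g⁻¹ * x) (g⁻¹ * y))) := by
  classical
  set S : Set Γ := {z | ∃ k ∈ K, ∃ d ∈ D, z = k⁻¹ * d} with hS
  obtain ⟨h1i, h1t, h1a⟩ := h1
  obtain ⟨h2i, h2t, h2a⟩ := h2
  refine ⟨fun x y => (x ∈ S ∧ y ∈ S ∧ r1 x y) ∨ (x ∉ S ∧ y ∉ S ∧ r2 x y) ∨
      (x ∈ S ∧ y ∉ S), ⟨?_, ?_, ?_⟩, ?_, ?_⟩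
  · intro x
    have := h1i x; have := h2i x; tauto
  · intro x y z hxy hyz
    rcases hxy with ⟨hx, hy, h⟩ | ⟨hx, hy, h⟩ | ⟨hx, hy⟩ <;>
      rcases hyz with ⟨hy', hz, h'⟩ | ⟨hy', hz, h'⟩ | ⟨hy', hz⟩ <;>
      first
        | exact absurd hy' hy
        | exact absurd hy hy'
        | exact Or.inl ⟨hx, hz, h1t _ _ _ h h'⟩
        | exact Or.inr (Or.inl ⟨hx, hz, h2t _ _ _ h h'⟩)
        | exact Or.inr (Or.inr ⟨hx, hz⟩)
  · intro x y hxy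
    by_cases hx : x ∈ S <;> by_cases hy : y ∈ S
    · have := h1a x y hxy; unfold Xor' Xor at *; tauto
    · unfold Xor'; tauto
    · unfold Xor'; tauto
    · have := h2a x y hxy; unfold Xor' Xor at *; tauto
  · intro g hg x hx y hy
    have hxs : g⁻¹ * x ∈ S := ⟨g, hg, x, hx, rfl⟩
    have hys : g⁻¹ * y ∈ S := ⟨g, hg, y, hy, rfl⟩
    constructor
    · rintro (⟨_, _, h⟩ | ⟨h, _⟩ | ⟨_, h⟩) <;> first | exact h | exact absurd hxs h | exact absurd hys h
    · intro h; exact Or.inl ⟨hxs, hys, h⟩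
  · intro g hg x hx y hy
    have hxs : g⁻¹ * x ∉ S := by
      rintro ⟨k, hk, d, hd, he⟩
      exact hg ⟨x, hx, d, hd, k, hk, by
        rw [show x * d⁻¹ * k = x * (k⁻¹ * d)⁻¹ by group, ← he]; group⟩
    have hys : g⁻¹ * y ∉ S := by
      rintro ⟨k, hk, d, hd, he⟩
      exact hg ⟨y, hy, d, hd, k, hk, by
        rw [show y * d⁻¹ * k = y * (k⁻¹ * d)⁻¹ by group, ← he]; group⟩
    constructor
    · rintro (⟨h, _⟩ | ⟨_, _, h⟩ | ⟨h, _⟩) <;> first | exact h | exact absurd h hxs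
    · intro h; exact Or.inr (Or.inl ⟨hxs, hys, h⟩)
end

section
/- Let H = [0,1]^ℕ be the Hilbert cube with the lexicographic order ≤_H: x ≤_H y iff x = y or there exists n with x_n < y_n and x_k = y_k for all k < n. Then every nonempty closed subset of H has a ≤_H-maximal element (a greatest element with respect to ≤_H). -/
open Set

/-- Iterated maximization sets. -/
private def hcB (A : Set (ℕ → unitInterval)) : ℕ → Set (ℕ → unitInterval)
  | 0 => A
  | n+1 => {a ∈ hcB A n | ∀ b ∈ hcB A n, b n ≤ a n}

private lemma hcB_succ_subset (A : Set (ℕ → unitInterval)) (n : ℕ) :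
    hcB A (n+1) ⊆ hcB A n := fun _ h => h.1

private lemma hcB_closed {A : Set (ℕ → unitInterval)} (hA : IsClosed A) :
    ∀ n, IsClosed (hcB A n)
  | 0 => hA
  | n+1 => by
    have h : hcB A (n+1) = hcB A n ∩ ⋂ b ∈ hcB A n, {a | b n ≤ a n} := by
      ext a; simp [hcB]
    rw [h]
    exact (hcB_closed hA n).inter (isClosed_biInter fun b _ =>
      isClosed_le continuous_const (continuous_apply n))

private lemma hcB_nonempty {A : Set (ℕ → unitInterval)} (hA : IsClosed A)
    (hne : A.Nonempty) : ∀ n, (hcB A n).Nonempty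
  | 0 => hne
  | n+1 => by
    have hcomp : IsCompact (hcB A n) := (hcB_closed hA n).isCompact
    have himg : IsCompact ((fun a => a n) '' hcB A n) :=
      hcomp.image (continuous_apply n)
    obtain ⟨c, hc⟩ := himg.exists_isGreatest
      ((hcB_nonempty hA hne n).image _)
    obtain ⟨a, ha, hac⟩ := hc.1
    exact ⟨a, ha, fun b hb => by
      simp only [] at hac; rw [show a n = c from hac]; exact hc.2 ⟨b, hb, rfl⟩⟩

/-- Every nonempty closed subset of the Hilbert cube has a greatest element
with respect to the lexicographic order. -/
theorem hilbertCube_lex_max (A : Set (ℕ → unitInterval))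
    (hA : IsClosed A) (hne : A.Nonempty) :
    ∃ m ∈ A, ∀ a ∈ A,
      a = m ∨ ∃ n : ℕ, a n < m n ∧ ∀ k < n, a k = m k := by
  have hInter : (⋂ n, hcB A n).Nonempty := by
    apply IsCompact.nonempty_iInter_of_sequence_nonempty_isCompact_isClosed
      (hcB A) (hcB_succ_subset A) (hcB_nonempty hA hne)
      ((hcB_closed hA 0).isCompact) (hcB_closed hA)
  obtain ⟨m, hm⟩ := hInter
  simp only [mem_iInter] at hm
  refine ⟨m, hm 0, fun a ha => ?_⟩
  by_cases hcase : a = m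
  · exact Or.inl hcase
  · right
    have hex : ∃ n, a n ≠ m n := by
      by_contra h
      push_neg at h
      exact hcase (funext h)
    classical
    let n := Nat.find hex
    have hn : a n ≠ m n := Nat.find_spec hex
    have hlt : ∀ k < n, a k = m k := fun k hk => by
      by_contra h
      exact absurd (Nat.find_le h) (not_le.mpr hk)
    -- a ∈ hcB A k for all k ≤ n
    have hmem : ∀ k ≤ n, a ∈ hcB A k := by
      intro k hk
      induction k with
      | zero => exact ha
      | succ j ih =>
        have hj : j < n := Nat.lt_of_succ_le hk
        refine ⟨ih (le_of_lt hj), fun b hb => ?_⟩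
        rw [hlt j hj]
        exact (hm (j+1)).2 b hb
    have h1 : a n ≤ m n := (hm (n+1)).2 a (hmem n le_rfl)
    exact ⟨n, lt_of_le_of_ne h1 hn, hlt⟩
end

section
/- Let Γ be a group with a subgroup Δ, let ≺ be a left-Δ-invariant total order on Δ, and let x : Γ/Δ → [0,1] be an injective function on the coset space. Define a relation ≺̃ on Γ by: g ≺̃ h iff x(gΔ) < x(hΔ), or (g⁻¹h ∈ Δ \ {e} and e ≺ g⁻¹h). Then ≺̃ is a total order on Γ whose restriction to Δ extends ≺ (i.e., for δ₁, δ₂ ∈ Δ, δ₁ ≺̃ δ₂ iff δ₁ ≺ δ₂). -/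
/-- Extending a left-invariant total order `s` on a subgroup `Δ ≤ Γ` to a
total order on `Γ` using an injective function on the coset space: the
relation `g ≺̃ h ↔ f(gΔ) < f(hΔ) ∨ (g⁻¹h ∈ Δ \ {1} ∧ 1 ≺ g⁻¹h)` is a total
order on `Γ` whose restriction to `Δ` coincides with `s`. -/
theorem subgroup_order_extension (Γ : Type*) [Group Γ] (Δ : Subgroup Γ)
    (s : Δ → Δ → Prop)
    (hirr : ∀ a, ¬ s a a)
    (htr : ∀ a b c, s a b → s b c → s a c)
    (htot : ∀ a b : Δ, a ≠ b → Xor' (s a b) (s b a))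
    (hli : ∀ δ a b : Δ, s a b → s (δ * a) (δ * b))
    (f : Γ ⧸ Δ → ℝ) (hrange : ∀ c, f c ∈ Set.Icc (0 : ℝ) 1)
    (hinj : Function.Injective f) :
    ∃ r : Γ → Γ → Prop,
      (∀ g h : Γ, r g h ↔ (f (g : Γ ⧸ Δ) < f (h : Γ ⧸ Δ) ∨
        ∃ hm : g⁻¹ * h ∈ Δ, g⁻¹ * h ≠ 1 ∧ s 1 ⟨g⁻¹ * h, hm⟩)) ∧
      (∀ g, ¬ r g g) ∧
      (∀ g h k, r g h → r h k → r g k) ∧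
      (∀ g h : Γ, g ≠ h → Xor' (r g h) (r h g)) ∧
      (∀ d1 d2 : Δ, r (d1 : Γ) (d2 : Γ) ↔ s d1 d2) := by
  classical
  -- helper facts about s
  have hasym : ∀ a b : Δ, s a b → ¬ s b a := by
    intro a b hab hba
    exact hirr a (htr a b a hab hba)
  -- the relation
  refine ⟨fun g h => f (g : Γ ⧸ Δ) < f (h : Γ ⧸ Δ) ∨
      ∃ hm : g⁻¹ * h ∈ Δ, g⁻¹ * h ≠ 1 ∧ s 1 ⟨g⁻¹ * h, hm⟩, fun g h => Iff.rfl, ?_, ?_, ?_, ?_⟩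
  · -- irreflexive
    intro g hg
    rcases hg with h | ⟨hm, hne, _⟩
    · exact lt_irrefl _ h
    · exact hne (by simp)
  · -- transitive
    intro g h k hgh hhk
    have coset_eq : ∀ a b : Γ, a⁻¹ * b ∈ Δ → ((a : Γ ⧸ Δ) = (b : Γ ⧸ Δ)) := by
      intro a b hab
      exact (QuotientGroup.eq ).mpr hab
    rcases hgh with h1 | ⟨hm1, hne1, hs1⟩
    · rcases hhk with h2 | ⟨hm2, hne2, hs2⟩
      · exact Or.inl (lt_trans h1 h2)
      · exact Or.inl (by rw [← coset_eq h k hm2]; exact h1)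
    · rcases hhk with h2 | ⟨hm2, hne2, hs2⟩
      · exact Or.inl (by rw [coset_eq g h hm1]; exact h2)
      · -- both in same coset: g⁻¹k = (g⁻¹h)(h⁻¹k) ∈ Δ
        have hm3 : g⁻¹ * k ∈ Δ := by
          have := Δ.mul_mem hm1 hm2
          simpa [mul_assoc] using this
        have hprod : (⟨g⁻¹ * k, hm3⟩ : Δ) = ⟨g⁻¹ * h, hm1⟩ * ⟨h⁻¹ * k, hm2⟩ := by
          ext; simp [mul_assoc]
        have hs3 : s 1 ⟨g⁻¹ * k, hm3⟩ := by
          rw [hprod]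
          have := hli ⟨g⁻¹ * h, hm1⟩ 1 ⟨h⁻¹ * k, hm2⟩ hs2
          rw [mul_one] at this
          exact htr _ _ _ hs1 this
        refine Or.inr ⟨hm3, ?_, hs3⟩
        intro hone
        have heq : (⟨g⁻¹ * k, hm3⟩ : Δ) = 1 := Subtype.ext hone
        rw [heq] at hs3
        exact hirr 1 hs3
  · -- totality
    intro g h hne
    by_cases hco : (g : Γ ⧸ Δ) = (h : Γ ⧸ Δ)
    · have hm : g⁻¹ * h ∈ Δ := (QuotientGroup.eq).mp hco
      have hm' : h⁻¹ * g ∈ Δ := (QuotientGroup.eq).mp hco.symm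
      have hne1 : g⁻¹ * h ≠ 1 := by
        intro hx
        exact hne (inv_mul_eq_one.mp hx)
      have hne1' : (⟨g⁻¹ * h, hm⟩ : Δ) ≠ 1 := by
        intro hx; exact hne1 (congrArg Subtype.val hx)
      have hinv : (⟨h⁻¹ * g, hm'⟩ : Δ) = (⟨g⁻¹ * h, hm⟩ : Δ)⁻¹ := by
        ext; simp
      rcases htot 1 ⟨g⁻¹ * h, hm⟩ (fun hx => hne1' hx.symm) with ⟨h1, h2⟩ | ⟨h1, h2⟩
      · -- s 1 (g⁻¹h): r g h holds, r h g fails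
        refine Or.inl ⟨Or.inr ⟨hm, hne1, h1⟩, ?_⟩
        rintro (hlt | ⟨hm2, hne2, hs2⟩)
        · rw [hco] at hlt; exact lt_irrefl _ hlt
        · -- s 1 (h⁻¹g) = s 1 (g⁻¹h)⁻¹, contradicts s 1 (g⁻¹h)
          have : s 1 (⟨g⁻¹ * h, hm⟩ : Δ)⁻¹ := by
            rw [← hinv]; convert hs2 using 2
          have := hli (⟨g⁻¹ * h, hm⟩ : Δ) 1 _ this
          rw [mul_one, mul_inv_cancel] at this
          exact hasym _ _ h1 this
      · -- here h1 : s (g⁻¹h) 1, so s 1 (g⁻¹h)⁻¹ = s 1 (h⁻¹g): r h g holds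
        refine Or.inr ⟨?_, ?_⟩
        · have hs' : s ⟨g⁻¹ * h, hm⟩ 1 := h1
          have hiv : s 1 (⟨g⁻¹ * h, hm⟩ : Δ)⁻¹ := by
            have := hli (⟨g⁻¹ * h, hm⟩ : Δ)⁻¹ _ _ hs'
            rwa [inv_mul_cancel, mul_one] at this
          rw [← hinv] at hiv
          refine Or.inr ⟨hm', ?_, hiv⟩
          intro hx
          exact hne (inv_mul_eq_one.mp hx).symm
        · rintro (hlt | ⟨hm2, hne2, hs2⟩)
          · rw [hco] at hlt; exact lt_irrefl _ hlt
          · exact h2 (by convert hs2 using 2)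
    · have hfne : f (g : Γ ⧸ Δ) ≠ f (h : Γ ⧸ Δ) := fun hx => hco (hinj hx)
      have hnm : g⁻¹ * h ∉ Δ := fun hx => hco ((QuotientGroup.eq).mpr hx)
      have hnm' : h⁻¹ * g ∉ Δ := fun hx => hco ((QuotientGroup.eq).mpr hx).symm
      rcases lt_or_gt_of_ne hfne with hlt | hgt
      · refine Or.inl ⟨Or.inl hlt, ?_⟩
        rintro (h2 | ⟨hm2, _, _⟩)
        · exact lt_asymm hlt h2
        · exact hnm' hm2
      · refine Or.inr ⟨Or.inl hgt, ?_⟩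
        rintro (h2 | ⟨hm2, _, _⟩)
        · exact lt_asymm hgt h2
        · exact hnm hm2
  · -- restriction to Δ
    intro d1 d2
    have hm : (d1 : Γ)⁻¹ * (d2 : Γ) ∈ Δ := Δ.mul_mem (Δ.inv_mem d1.2) d2.2
    have hco : ((d1 : Γ) : Γ ⧸ Δ) = ((d2 : Γ) : Γ ⧸ Δ) := (QuotientGroup.eq).mpr hm
    constructor
    · rintro (hlt | ⟨hm2, hne2, hs2⟩)
      · rw [hco] at hlt; exact absurd hlt (lt_irrefl _)
      · have : s (d1 * 1) (d1 * ⟨(d1 : Γ)⁻¹ * (d2 : Γ), hm2⟩) := hli d1 _ _ hs2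
        rw [mul_one] at this
        convert this using 1
        ext; simp
    · intro hs12
      have hne12 : d1 ≠ d2 := fun hx => hirr d1 (hx ▸ hs12)
      have : s (d1⁻¹ * d1) (d1⁻¹ * d2) := hli d1⁻¹ _ _ hs12
      rw [inv_mul_cancel] at this
      refine Or.inr ⟨hm, ?_, ?_⟩
      · intro hx
        exact hne12 (Subtype.ext (inv_mul_eq_one.mp hx))
      · exact this
end
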